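/- arXiv:0901.2132 — 2 statements merged into one kernel-verified Lean document; each statement's English description precedes it below -/
import Mathlib

section
/- Let $A \ge 1$ and suppose $|a_j(\tau)| \ge A^j$ for all $1 \le j \le k-1$ and all $\tau \in [t_{k-1}, t]$, where $t \ge t_{k-1} + \frac{1}{k^2}\ln\frac{3k-3}{2k-3}$. Then $3k\, e^{-k^2 t}\int_{t_{k-1}}^t e^{k^2 \tau} \sum_{k_1+k_2=k,\ k_1,k_2 \ge 1} |a_{k_1}(\tau)|\,|a_{k_2}(\tau)|\, d\tau \ge \frac{3(k-1)}{k}\left(1 - e^{-k^2(t - t_{k-1})}\right) A^k \ge A^k$. -/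
/-
The convolution sum has `k - 1` terms, each at least `A ^ j * A ^ (k - j) = A ^ k`, so the
Duhamel integral is at least `(k - 1) A ^ k` times `∫ₛᵗ e^{k² τ} dτ`, which produces the middle
expression. Its coefficient is at least `1` because the waiting time `t - s` forces
`e^{-k²(t - s)} ≤ (2k - 3)/(3k - 3)`, i.e. `1 - e^{-k²(t - s)} ≥ k/(3k - 3)`.
-/

open MeasureTheory Real Finset intervalIntegral

lemma integral_exp_mul {c : ℝ} (hc : c ≠ 0) (s t : ℝ) :
    ∫ τ in s..t, exp (c * τ) = (exp (c * t) - exp (c * s)) / c := by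
  rw [integral_comp_mul_left (fun x => exp x) hc, integral_exp, smul_eq_mul, inv_mul_eq_div]

lemma one_sub_exp_mul_le_mul_exp_mul_integral {c m s t : ℝ} {f : ℝ → ℝ} (hc : 0 < c)
    (hst : s ≤ t) (hf : IntervalIntegrable f volume s t) (hfm : ∀ τ ∈ Set.Icc s t, m ≤ f τ) :
    (1 - exp (-c * (t - s))) * m ≤ c * exp (-c * t) * ∫ τ in s..t, exp (c * τ) * f τ := by
  have hexp : Continuous fun τ => exp (c * τ) := by fun_prop
  calc (1 - exp (-c * (t - s))) * m
      = c * exp (-c * t) * ∫ τ in s..t, exp (c * τ) * m := by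
        rw [intervalIntegral.integral_mul_const, integral_exp_mul hc.ne']
        have hsplit : exp (-c * (t - s)) = exp (-c * t) * exp (c * s) := by rw [← exp_add]; ring_nf
        have hinv : exp (-(c * t)) * exp (c * t) = 1 := by rw [← exp_add, neg_add_cancel, exp_zero]
        rw [hsplit]
        field_simp
        linear_combination (-m) * hinv
    _ ≤ c * exp (-c * t) * ∫ τ in s..t, exp (c * τ) * f τ := by
        gcongr
        refine integral_mono_on hst ((hexp.mul continuous_const).intervalIntegrable s t)
          (hf.continuousOn_mul hexp.continuousOn) fun τ hτ => ?_
        exact mul_le_mul_of_nonneg_left (hfm τ hτ) (exp_pos _).le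

lemma sub_one_mul_pow_le_sum_Ico_mul {A : ℝ} (hA : 0 ≤ A) {k : ℕ} {b : ℕ → ℝ}
    (hb : ∀ j, 1 ≤ j → j ≤ k - 1 → A ^ j ≤ b j) :
    ((k : ℝ) - 1) * A ^ k ≤ ∑ j ∈ Ico 1 k, b j * b (k - j) := by
  have hterm : ∀ j ∈ Ico 1 k, A ^ k ≤ b j * b (k - j) := by
    intro j hj
    obtain ⟨hj1, hjk⟩ := mem_Ico.1 hj
    rw [← pow_mul_pow_sub A hjk.le]
    exact mul_le_mul (hb j hj1 (by omega)) (hb (k - j) (by omega) (by omega))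
      (by positivity) ((pow_nonneg hA j).trans (hb j hj1 (by omega)))
  calc ((k : ℝ) - 1) * A ^ k ≤ (#(Ico 1 k) : ℝ) * A ^ k := by
        gcongr
        rw [Nat.card_Ico]
        rcases k with _ | k <;> simp
    _ ≤ ∑ j ∈ Ico 1 k, b j * b (k - j) := by
        simpa only [nsmul_eq_mul] using card_nsmul_le_sum _ _ _ hterm

lemma one_le_three_mul_sub_one_div_mul_one_sub_exp {K d : ℝ} (hK : 2 ≤ K)
    (hd : 1 / K ^ 2 * log ((3 * K - 3) / (2 * K - 3)) ≤ d) :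
    1 ≤ 3 * (K - 1) / K * (1 - exp (-K ^ 2 * d)) := by
  have hden : 0 < 2 * K - 3 := by linarith
  have hratio : (3 * K - 3) / (2 * K - 3) ≤ exp (K ^ 2 * d) := by
    rw [← exp_log (div_pos (by linarith) hden)]
    refine exp_le_exp.2 ?_
    rwa [one_div, inv_mul_le_iff₀ (by positivity)] at hd
  have hE : exp (-K ^ 2 * d) * (3 * K - 3) ≤ 2 * K - 3 := by
    rw [neg_mul, exp_neg, inv_mul_le_iff₀ (exp_pos _)]
    rwa [div_le_iff₀ hden] at hratio
  rw [div_mul_eq_mul_div, le_div_iff₀ (by positivity)]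
  nlinarith

theorem stmt_6 (A s t : ℝ) (k : ℕ) (hk : 2 ≤ k) (hA : 1 ≤ A)
    (a : ℕ → ℝ → ℂ) (hcont : ∀ j : ℕ, Continuous (a j))
    (ht : t ≥ s + (1 / (k : ℝ) ^ 2) *
      Real.log ((3 * (k : ℝ) - 3) / (2 * (k : ℝ) - 3)))
    (hlow : ∀ j : ℕ, 1 ≤ j → j ≤ k - 1 → ∀ τ ∈ Set.Icc s t, A ^ j ≤ ‖a j τ‖) :
    3 * (k : ℝ) * Real.exp (-(k : ℝ) ^ 2 * t) *
        (∫ τ in s..t, Real.exp ((k : ℝ) ^ 2 * τ) *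
          ∑ j ∈ Finset.Ico 1 k, ‖a j τ‖ * ‖a (k - j) τ‖)
      ≥ 3 * ((k : ℝ) - 1) / k * (1 - Real.exp (-(k : ℝ) ^ 2 * (t - s))) * A ^ k ∧
    3 * ((k : ℝ) - 1) / k * (1 - Real.exp (-(k : ℝ) ^ 2 * (t - s))) * A ^ k ≥ A ^ k := by
  have hK : (2 : ℝ) ≤ k := by exact_mod_cast hk
  have hst : s ≤ t := by
    have : 0 ≤ log ((3 * (k : ℝ) - 3) / (2 * k - 3)) :=
      log_nonneg (by rw [le_div_iff₀ (by linarith)]; linarith)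
    have : 0 ≤ 1 / (k : ℝ) ^ 2 * log ((3 * (k : ℝ) - 3) / (2 * k - 3)) := by positivity
    linarith
  have hcoef := one_le_three_mul_sub_one_div_mul_one_sub_exp (d := t - s) hK (by linarith)
  have hsum : Continuous fun τ => ∑ j ∈ Ico 1 k, ‖a j τ‖ * ‖a (k - j) τ‖ := by
    fun_prop
  have hduhamel := one_sub_exp_mul_le_mul_exp_mul_integral (c := (k : ℝ) ^ 2) (by positivity)
    hst (hsum.intervalIntegrable s t) fun τ hτ =>
      sub_one_mul_pow_le_sum_Ico_mul (by linarith) fun j hj1 hjk => hlow j hj1 hjk τ hτ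
  refine ⟨?_, le_mul_of_one_le_left (by positivity) hcoef⟩
  calc 3 * ((k : ℝ) - 1) / k * (1 - exp (-(k : ℝ) ^ 2 * (t - s))) * A ^ k
      = 3 / k * ((1 - exp (-(k : ℝ) ^ 2 * (t - s))) * (((k : ℝ) - 1) * A ^ k)) := by ring
    _ ≤ 3 / k * ((k : ℝ) ^ 2 * exp (-(k : ℝ) ^ 2 * t) * ∫ τ in s..t, exp ((k : ℝ) ^ 2 * τ) *
          ∑ j ∈ Ico 1 k, ‖a j τ‖ * ‖a (k - j) τ‖) := by gcongr
    _ = _ := by field_simp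
end

section
/- Suppose for each $k \ge 1$ the coefficient $a_k(t)$ is of the form $\sum_{m=k}^{k^2} \alpha_{k,m} e^{-m\nu t}$ with $\alpha_{k,m} \in \mathbf{C}$, where the $a_k$ satisfy $a_1(t) = a e^{-\nu t}$ and $a_k(t) = 3ik\, e^{-\nu k^2 t}\int_0^t e^{\nu k^2 \tau} \sum_{k_1+k_2=k} a_{k_1}(\tau)a_{k_2}(\tau)\, d\tau$ for $k \ge 2$. Then $\alpha_{k,m} = 0$ whenever $k^2 - 2k + 2 < m < k^2$. -/
/-!
Write `e_n(t) = exp(-nνt)`. Each product `a_j a_{k-j}` is a combination of modes `e_{m₁+m₂}` with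
`m₁ + m₂ ≤ j² + (k-j)² ≤ k² - 2k + 2`. Integrating such a combination against the Duhamel kernel
`e^{-νk²(t-τ)}` maps `e_n` (for `n ≠ k²`) to a multiple of `e_n - e_{k²}`, so `a_k` is a combination of
modes in `[0, k² - 2k + 2] ∪ {k²}`. Since the modes are linearly independent (they are the powers of
the injective function `e_1`), the coefficients of `a_k` on the gap vanish.
-/

open MeasureTheory Polynomial Submodule
open scoped Pointwise

noncomputable def expMode (ν : ℝ) (n : ℕ) : ℝ → ℂ := fun t => Complex.exp (-(n : ℂ) * ν * t)

noncomputable def expSpan (ν : ℝ) (S : Set ℕ) : Submodule ℂ (ℝ → ℂ) := span ℂ (expMode ν '' S)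

noncomputable def duhamel (ν : ℝ) (K : ℕ) (f : ℝ → ℂ) : ℝ → ℂ := fun t =>
  Real.exp (-ν * K * t) * ∫ τ in (0 : ℝ)..t, (Real.exp (ν * K * τ) : ℂ) * f τ

variable {ν : ℝ}

theorem expMode_add (m n : ℕ) : expMode ν (m + n) = expMode ν m * expMode ν n := by
  ext t
  simp only [expMode, Pi.mul_apply, ← Complex.exp_add]
  push_cast
  ring_nf

theorem expMode_eq_pow (n : ℕ) : expMode ν n = expMode ν 1 ^ n := by
  induction n with
  | zero => ext; simp [expMode]
  | succ n ih => rw [expMode_add, ih, pow_succ]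

theorem expMode_one_injective (hν : ν ≠ 0) : Function.Injective (expMode ν 1) := by
  have hreal : ∀ t, expMode ν 1 t = (Real.exp (-ν * t) : ℂ) := by
    intro t; simp [expMode, Complex.ofReal_exp]
  intro s t hst
  rw [hreal, hreal, Complex.ofReal_inj, Real.exp_eq_exp] at hst
  exact mul_left_cancel₀ (neg_ne_zero.mpr hν) hst

theorem linearIndependent_expMode (hν : ν ≠ 0) : LinearIndependent ℂ (expMode ν) := by
  have hpow : expMode ν = fun n => (LinearMap.mulLeft ℂ (expMode ν 1) ^ n) 1 := by
    ext1 n; rw [LinearMap.pow_mulLeft, LinearMap.mulLeft_apply, mul_one, expMode_eq_pow]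
  rw [hpow, linearIndependent_powers_iff_aeval]
  intro p hp
  have hroot : ∀ t, p.eval (expMode ν 1 t) = 0 := by
    intro t
    have h : aeval (Algebra.lmul ℂ (ℝ → ℂ) (expMode ν 1)) p 1 t = 0 := congrFun hp t
    rwa [aeval_algHom_apply, Algebra.coe_lmul_eq_mul, LinearMap.mul_apply', mul_one,
      aeval_pi_apply₂, coe_aeval_eq_eval] at h
  exact p.eq_zero_of_infinite_isRoot <| (Set.infinite_range_of_injective
    (expMode_one_injective hν)).mono (by rintro _ ⟨t, rfl⟩; exact hroot t)

theorem continuous_expMode (n : ℕ) : Continuous (expMode ν n) := by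
  unfold expMode; fun_prop

theorem expSpan_mono {S T : Set ℕ} (h : S ⊆ T) : expSpan ν S ≤ expSpan ν T :=
  span_mono (Set.image_mono h)

theorem expMode_mem_expSpan {S : Set ℕ} {n : ℕ} (hn : n ∈ S) : expMode ν n ∈ expSpan ν S :=
  subset_span (Set.mem_image_of_mem _ hn)

theorem sum_smul_expMode_mem_expSpan (s : Finset ℕ) (c : ℕ → ℂ) :
    ∑ n ∈ s, c n • expMode ν n ∈ expSpan ν s :=
  sum_mem fun _ hn => smul_mem _ _ (expMode_mem_expSpan hn)

theorem mul_mem_expSpan {S T : Set ℕ} {f g : ℝ → ℂ} (hf : f ∈ expSpan ν S)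
    (hg : g ∈ expSpan ν T) : f * g ∈ expSpan ν (S + T) := by
  have hfg : f * g ∈ span ℂ (expMode ν '' S * expMode ν '' T) :=
    span_mul_span ℂ (expMode ν '' S) (expMode ν '' T) ▸ mul_mem_mul hf hg
  refine span_mono ?_ hfg
  rintro _ ⟨_, ⟨m, hm, rfl⟩, _, ⟨n, hn, rfl⟩, rfl⟩
  exact ⟨m + n, Set.add_mem_add hm hn, expMode_add m n⟩

theorem continuous_of_mem_expSpan {S : Set ℕ} {f : ℝ → ℂ} (hf : f ∈ expSpan ν S) :
    Continuous f := by
  induction hf using span_induction with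
  | mem _ h => obtain ⟨n, -, rfl⟩ := h; exact continuous_expMode n
  | zero => exact continuous_zero
  | add _ _ _ _ hf hg => exact hf.add hg
  | smul c _ _ hf => exact hf.const_smul c

theorem duhamel_add {K : ℕ} {f g : ℝ → ℂ} (hf : Continuous f) (hg : Continuous g) :
    duhamel ν K (f + g) = duhamel ν K f + duhamel ν K g := by
  have hint : ∀ (h : ℝ → ℂ) (t : ℝ), Continuous h →
      IntervalIntegrable (fun τ => (Real.exp (ν * K * τ) : ℂ) * h τ) volume 0 t :=
    fun h t hh => (by fun_prop : Continuous _).intervalIntegrable _ _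
  ext t
  simp only [duhamel, Pi.add_apply, mul_add,
    intervalIntegral.integral_add (hint f t hf) (hint g t hg)]

theorem duhamel_smul (K : ℕ) (c : ℂ) (f : ℝ → ℂ) :
    duhamel ν K (c • f) = c • duhamel ν K f := by
  ext t
  simp only [duhamel, Pi.smul_apply, smul_eq_mul, mul_left_comm _ c,
    intervalIntegral.integral_const_mul]

theorem duhamel_zero (K : ℕ) : duhamel ν K 0 = 0 := by
  ext t; simp [duhamel]

theorem duhamel_expMode (hν : ν ≠ 0) {K n : ℕ} (hn : n ≠ K) :
    duhamel ν K (expMode ν n) =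
      (((K : ℂ) - n) * ν)⁻¹ • (expMode ν n - expMode ν K) := by
  have hc : ((K : ℂ) - n) * ν ≠ 0 := mul_ne_zero (sub_ne_zero.mpr (by exact_mod_cast hn.symm))
    (by exact_mod_cast hν)
  ext t
  have hint : ∫ τ in (0 : ℝ)..t, (Real.exp (ν * K * τ) : ℂ) * expMode ν n τ =
      ∫ τ in (0 : ℝ)..t, Complex.exp ((((K : ℂ) - n) * ν) * τ) := by
    refine intervalIntegral.integral_congr fun τ _ => ?_
    simp only [expMode, Complex.ofReal_exp, ← Complex.exp_add]
    push_cast; ring_nf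
  simp only [duhamel]
  rw [hint, integral_exp_mul_complex hc]
  have hprod : Complex.exp ((((K : ℂ) - n) * ν) * t) * Complex.exp (-(K : ℂ) * ν * t) =
      Complex.exp (-(n : ℂ) * ν * t) := by
    rw [← Complex.exp_add]; ring_nf
  simp only [Pi.smul_apply, Pi.sub_apply, expMode, smul_eq_mul, Complex.ofReal_exp]
  push_cast
  rw [mul_zero, Complex.exp_zero, show -(ν : ℂ) * K * t = -(K : ℂ) * ν * t by ring]
  linear_combination (((K : ℂ) - n) * ν)⁻¹ * hprod

theorem duhamel_mem_expSpan (hν : ν ≠ 0) {K : ℕ} {S : Set ℕ} (hK : K ∉ S) {f : ℝ → ℂ}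
    (hf : f ∈ expSpan ν S) : duhamel ν K f ∈ expSpan ν (insert K S) := by
  induction hf using span_induction with
  | mem _ h =>
    obtain ⟨n, hn, rfl⟩ := h
    rw [duhamel_expMode hν (ne_of_mem_of_not_mem hn hK)]
    exact smul_mem _ _ (sub_mem (expMode_mem_expSpan (Set.mem_insert_of_mem _ hn))
      (expMode_mem_expSpan (Set.mem_insert _ _)))
  | zero => rw [duhamel_zero]; exact zero_mem _
  | add f g hf' hg' hf hg =>
    rw [duhamel_add (continuous_of_mem_expSpan hf') (continuous_of_mem_expSpan hg')]
    exact add_mem hf hg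
  | smul c _ _ hf => rw [duhamel_smul]; exact smul_mem _ _ hf

theorem coeff_eq_zero_of_sum_mem_expSpan (hν : ν ≠ 0) {s : Finset ℕ} {c : ℕ → ℂ} {T : Set ℕ}
    (h : ∑ n ∈ s, c n • expMode ν n ∈ expSpan ν T) {m : ℕ} (hm : m ∈ s) (hmT : m ∉ T) :
    c m = 0 := by
  by_contra hcm
  have hsplit : c m • expMode ν m =
      ∑ n ∈ s, c n • expMode ν n - ∑ n ∈ s.erase m, c n • expMode ν n := by
    rw [← Finset.add_sum_erase s _ hm, add_sub_cancel_right]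
  have hmem : c m • expMode ν m ∈ expSpan ν (T ∪ ↑(s.erase m)) := by
    rw [hsplit]
    exact sub_mem (expSpan_mono Set.subset_union_left h)
      (expSpan_mono Set.subset_union_right (sum_smul_expMode_mem_expSpan _ _))
  refine (linearIndependent_expMode hν).notMem_span_image (s := T ∪ ↑(s.erase m)) ?_
    ((smul_mem_iff _ hcm).mp hmem)
  simp [hmT]

theorem sq_add_sq_sub_le {j k : ℕ} (hj : 1 ≤ j) (hjk : j < k) :
    j ^ 2 + (k - j) ^ 2 ≤ k ^ 2 - 2 * k + 2 := by
  obtain ⟨r, rfl⟩ := Nat.exists_eq_add_of_lt hjk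
  have hsub : 2 * (j + r + 1) ≤ (j + r + 1) ^ 2 := by nlinarith
  have hsq : j ^ 2 + (r + 1) ^ 2 + 2 * (j + r + 1) ≤ (j + r + 1) ^ 2 + 2 := by nlinarith
  rw [show j + r + 1 - j = r + 1 by omega]
  omega

theorem sum_mul_mem_expSpan_Iic {a : ℕ → ℝ → ℂ}
    (ha : ∀ j, 1 ≤ j → a j ∈ expSpan ν (Set.Icc j (j ^ 2))) (k : ℕ) :
    ∑ j ∈ Finset.Ico 1 k, a j * a (k - j) ∈ expSpan ν (Set.Iic (k ^ 2 - 2 * k + 2)) := by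
  refine sum_mem fun j hj => ?_
  obtain ⟨hj1, hjk⟩ := Finset.mem_Ico.mp hj
  refine expSpan_mono ?_ (mul_mem_expSpan (ha j hj1) (ha (k - j) (by omega)))
  exact (Set.Icc_add_Icc_subset _ _ _ _).trans
    (Set.Icc_subset_Iic_self.trans (Set.Iic_subset_Iic.mpr (sq_add_sq_sub_le hj1 hjk)))

theorem stmt_13_general (ν : ℝ) (hν : 0 < ν) (a : ℕ → ℝ → ℂ) (α : ℕ → ℕ → ℂ)
    (hk : ∀ k : ℕ, 2 ≤ k → ∀ t : ℝ,
      a k t = 3 * Complex.I * k * Real.exp (-ν * k ^ 2 * t) *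
        ∫ τ in (0 : ℝ)..t, (Real.exp (ν * k ^ 2 * τ) : ℂ) *
          ∑ j ∈ Finset.Ico 1 k, a j τ * a (k - j) τ)
    (hform : ∀ k : ℕ, 1 ≤ k → ∀ t : ℝ,
      a k t = ∑ m ∈ Finset.Icc k (k ^ 2), α k m * Complex.exp (-(m : ℂ) * ν * t)) :
    ∀ k m : ℕ, k ^ 2 - 2 * k + 2 < m → m < k ^ 2 → α k m = 0 := by
  intro k m hgap hm
  obtain hk2 : 2 ≤ k := by
    by_contra! h
    interval_cases k <;> omega
  have hsq : 2 * k ≤ k ^ 2 := by nlinarith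
  have hsq' : 3 * k ≤ k ^ 2 + 2 := by nlinarith
  have hexp : ∀ j, 1 ≤ j → a j = ∑ n ∈ Finset.Icc j (j ^ 2), α j n • expMode ν n := by
    intro j hj
    ext t
    simp only [hform j hj t, Finset.sum_apply, Pi.smul_apply, smul_eq_mul, expMode]
  have hspan : ∀ j, 1 ≤ j → a j ∈ expSpan ν (Set.Icc j (j ^ 2)) := fun j hj =>
    hexp j hj ▸ Finset.coe_Icc j (j ^ 2) ▸ sum_smul_expMode_mem_expSpan _ _
  have hak : a k = (3 * Complex.I * k) •
      duhamel ν (k ^ 2) (∑ j ∈ Finset.Ico 1 k, a j * a (k - j)) := by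
    ext t
    simp only [hk k hk2 t, duhamel, Finset.sum_apply, Pi.mul_apply, Pi.smul_apply,
      smul_eq_mul, Nat.cast_pow, mul_assoc]
  have hmem : a k ∈ expSpan ν (insert (k ^ 2) (Set.Iic (k ^ 2 - 2 * k + 2))) :=
    hak ▸ smul_mem _ _ (duhamel_mem_expSpan hν.ne' (by simp only [Set.mem_Iic]; omega)
      (sum_mul_mem_expSpan_Iic hspan k))
  rw [hexp k (by omega)] at hmem
  exact coeff_eq_zero_of_sum_mem_expSpan hν.ne' hmem (Finset.mem_Icc.mpr ⟨by omega, hm.le⟩)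
    (by simp only [Set.mem_insert_iff, Set.mem_Iic]; omega)

theorem stmt_13 (ν : ℝ) (hν : 0 < ν) (a0 : ℂ) (a : ℕ → ℝ → ℂ) (α : ℕ → ℕ → ℂ)
    (h1 : ∀ t : ℝ, a 1 t = a0 * Complex.exp (-(ν : ℂ) * t))
    (hk : ∀ k : ℕ, 2 ≤ k → ∀ t : ℝ,
      a k t = 3 * Complex.I * k * Real.exp (-ν * k ^ 2 * t) *
        ∫ τ in (0 : ℝ)..t, (Real.exp (ν * k ^ 2 * τ) : ℂ) *
          ∑ j ∈ Finset.Ico 1 k, a j τ * a (k - j) τ)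
    (hform : ∀ k : ℕ, 1 ≤ k → ∀ t : ℝ,
      a k t = ∑ m ∈ Finset.Icc k (k ^ 2), α k m * Complex.exp (-(m : ℂ) * ν * t)) :
    ∀ k m : ℕ, k ^ 2 - 2 * k + 2 < m → m < k ^ 2 → α k m = 0 :=
  stmt_13_general ν hν a α hk hform
end
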